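/- For x, y ∈ [l₁,u₁] × [l₂,u₂], the gap between the bilinear term xy and its McCormick over-estimator is at most (u₁ − l₁)(u₂ − l₂)/4; that is, min(u₁y + l₂x − u₁l₂, l₁y + u₂x − l₁u₂) − xy ≤ (u₁ − l₁)(u₂ − l₂)/4. -/

import Mathlib

/-!
With `a = u₁ - x`, `b = x - l₁`, `c = y - l₂`, `d = u₂ - y`, the two McCormick planes exceed
`x * y` by `a * c` and `b * d`. The smaller of two nonnegative numbers is at most their geometric
mean, and by AM-GM `a * b ≤ ((a + b) / 2) ^ 2 = ((u₁ - l₁) / 2) ^ 2`, likewise for `c * d`.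
-/

section

variable {K : Type*} [Field K] [LinearOrder K] [IsStrictOrderedRing K]

theorem min_sq_le_mul {p q : K} (hp : 0 ≤ p) (hq : 0 ≤ q) : min p q ^ 2 ≤ p * q := by
  rw [sq]
  exact mul_le_mul (min_le_left p q) (min_le_right p q) (le_min hp hq) hp

theorem min_mul_le_add_mul_add_div_four {a b c d : K}
    (ha : 0 ≤ a) (hb : 0 ≤ b) (hc : 0 ≤ c) (hd : 0 ≤ d) :
    min (a * c) (b * d) ≤ (a + b) * (c + d) / 4 := by
  have hab : a * b ≤ (a + b) ^ 2 / 4 := by linarith [four_mul_le_sq_add a b]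
  have hcd : c * d ≤ (c + d) ^ 2 / 4 := by linarith [four_mul_le_sq_add c d]
  refine le_of_pow_le_pow_left₀ two_ne_zero (by positivity) ?_
  calc min (a * c) (b * d) ^ 2
      ≤ (a * b) * (c * d) := by
        linarith [min_sq_le_mul (mul_nonneg ha hc) (mul_nonneg hb hd)]
    _ ≤ (a + b) ^ 2 / 4 * ((c + d) ^ 2 / 4) :=
        mul_le_mul hab hcd (mul_nonneg hc hd) (by positivity)
    _ = ((a + b) * (c + d) / 4) ^ 2 := by ring

end

/-- The gap between the bilinear term `x * y` and its McCormick over-estimator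
`min (u₁y + l₂x − u₁l₂) (l₁y + u₂x − l₁u₂)` is at most `(u₁ − l₁)(u₂ − l₂)/4`. -/
theorem mccormick_overestimator_gap
    (l₁ u₁ l₂ u₂ x y : ℝ)
    (hx₁ : l₁ ≤ x) (hx₂ : x ≤ u₁) (hy₁ : l₂ ≤ y) (hy₂ : y ≤ u₂) :
    min (u₁ * y + l₂ * x - u₁ * l₂) (l₁ * y + u₂ * x - l₁ * u₂) - x * y
      ≤ (u₁ - l₁) * (u₂ - l₂) / 4 := by
  calc min (u₁ * y + l₂ * x - u₁ * l₂) (l₁ * y + u₂ * x - l₁ * u₂) - x * y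
      = min ((u₁ - x) * (y - l₂)) ((x - l₁) * (u₂ - y)) := by
        rw [← min_sub_sub_right]
        congr 1 <;> ring
    _ ≤ ((u₁ - x) + (x - l₁)) * ((y - l₂) + (u₂ - y)) / 4 :=
        min_mul_le_add_mul_add_div_four (sub_nonneg.2 hx₂) (sub_nonneg.2 hx₁)
          (sub_nonneg.2 hy₁) (sub_nonneg.2 hy₂)
    _ = (u₁ - l₁) * (u₂ - l₂) / 4 := by ring
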